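/- If σ ≥ Δ·κ(δ, ε) with κ(δ, ε) = (1/(2ε))(K_δ + √(K_δ² + 2ε)) and K_δ = Q⁻¹(δ), then the single-shot Gaussian mechanism on ℝ is (ε, δ)-differentially private for queries with sensitivity Δ: for any a, ã ∈ ℝ with |a − ã| ≤ Δ and any measurable S ⊆ ℝ, P(a + w ∈ S) ≤ e^ε P(ã + w ∈ S) + δ, where w ~ N(0, σ²). -/

import Mathlib

open MeasureTheory ProbabilityTheory

noncomputable def Qfun (x : ℝ) : ℝ :=
  (1 / Real.sqrt (2 * Real.pi)) * ∫ u in Set.Ioi x, Real.exp (-u ^ 2 / 2)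

/-!
Off the set where the privacy loss `((x - ã)² - (x - a)²) / (2σ²)` exceeds `ε`, the density of
`N(a, σ²)` is at most `e^ε` times that of `N(ã, σ²)`. For `ã < a` that set is a half-line
`x > a + σ (εσ/t - t/(2σ))` with `t = a - ã`, of `N(a, σ²)`-mass `Q(εσ/t - t/(2σ))`; since
`u ↦ εu - 1/(2u)` is increasing and equals `K_δ` at `u = κ ≤ σ/t`, this mass is at most `δ`.
The case `ã > a` follows by the reflection `x ↦ -x`.
-/

open Set Real
open scoped NNReal ENNReal Pointwise

lemma gaussianReal_zero_one_Ioi (K : ℝ) : gaussianReal 0 1 (Ioi K) = ENNReal.ofReal (Qfun K) := by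
  rw [gaussianReal_apply_eq_integral _ one_ne_zero, Qfun, ← integral_const_mul]
  simp [gaussianPDFReal, div_eq_inv_mul]

lemma gaussianReal_map_const_add_mul (m σ : ℝ) :
    (gaussianReal 0 1).map (fun u ↦ m + σ * u) = gaussianReal m (σ ^ 2).toNNReal := by
  have : (fun u ↦ m + σ * u) = (m + ·) ∘ (σ * ·) := rfl
  rw [this, ← Measure.map_map (by fun_prop) (by fun_prop), gaussianReal_map_const_mul,
    gaussianReal_map_const_add]
  congr 1
  · ring
  · ext; simp [sq_nonneg]

lemma gaussianReal_Ioi_add_mul (m : ℝ) {σ : ℝ} (hσ : 0 < σ) (K : ℝ) :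
    gaussianReal m (σ ^ 2).toNNReal (Ioi (m + σ * K)) = ENNReal.ofReal (Qfun K) := by
  rw [← gaussianReal_map_const_add_mul, Measure.map_apply (by fun_prop) measurableSet_Ioi,
    ← gaussianReal_zero_one_Ioi]
  congr 1
  ext u
  simp [mul_lt_mul_iff_right₀ hσ]

lemma gaussianReal_neg_apply (m : ℝ) (v : ℝ≥0) (S : Set ℝ) :
    gaussianReal (-m) v (-S) = gaussianReal m v S := by
  rw [← gaussianReal_map_neg]
  exact ((MeasurableEquiv.neg ℝ).map_apply (-S)).trans (by simp)

lemma measure_le_mul_add_of_restrict_le {α : Type*} [MeasurableSpace α] {μ ν : Measure α}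
    {c : ℝ≥0∞} {G : Set α} (h : μ.restrict G ≤ c • ν.restrict G) (S : Set α) :
    μ S ≤ c * ν S + μ Gᶜ :=
  calc μ S ≤ μ (S ∩ G) + μ (S \ G) := measure_le_inter_add_sdiff μ S G
    _ ≤ μ.restrict G S + μ Gᶜ := by
      gcongr ?_ + ?_
      · exact Measure.le_restrict_apply G S
      · exact measure_mono (sdiff_subset_compl S G)
    _ ≤ c * ν S + μ Gᶜ := by
      gcongr
      exact (h S).trans (mul_le_mul_right (Measure.restrict_apply_le G S) c)

lemma gaussianPDFReal_le_exp_mul {a a' x ε : ℝ} {v : ℝ≥0} (hv : v ≠ 0)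
    (h : (x - a') ^ 2 - (x - a) ^ 2 ≤ 2 * ε * v) :
    gaussianPDFReal a v x ≤ exp ε * gaussianPDFReal a' v x := by
  have hv' : (0 : ℝ) < v := by positivity
  rw [gaussianPDFReal, gaussianPDFReal, mul_left_comm, ← exp_add]
  gcongr
  rw [← sub_le_iff_le_add, ← sub_div, div_le_iff₀ (by positivity)]
  linarith

lemma gaussianReal_restrict_le_exp_smul (a a' ε : ℝ) {v : ℝ≥0} (hv : v ≠ 0) :
    (gaussianReal a v).restrict {x | (x - a') ^ 2 - (x - a) ^ 2 ≤ 2 * ε * v} ≤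
      ENNReal.ofReal (exp ε) •
        (gaussianReal a' v).restrict {x | (x - a') ^ 2 - (x - a) ^ 2 ≤ 2 * ε * v} := by
  have hG : MeasurableSet {x : ℝ | (x - a') ^ 2 - (x - a) ^ 2 ≤ 2 * ε * v} :=
    measurableSet_le (by fun_prop) (by fun_prop)
  rw [gaussianReal_of_var_ne_zero _ hv, gaussianReal_of_var_ne_zero _ hv,
    restrict_withDensity hG, restrict_withDensity hG,
    ← withDensity_smul _ (measurable_gaussianPDF _ _)]
  refine withDensity_mono (ae_restrict_of_forall_mem hG fun x hx ↦ ?_)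
  rw [Pi.smul_apply, smul_eq_mul, gaussianPDF, gaussianPDF, ← ENNReal.ofReal_mul (exp_nonneg ε)]
  exact ENNReal.ofReal_le_ofReal (gaussianPDFReal_le_exp_mul hv hx)

/-- The constant `κ(δ, ε)` of the statement, as a function of `K = Q⁻¹(δ)` and `ε`. -/
noncomputable def noiseMultiplier (K ε : ℝ) : ℝ :=
  1 / (2 * ε) * (K + √(K ^ 2 + 2 * ε))

lemma noiseMultiplier_pos (K : ℝ) {ε : ℝ} (hε : 0 < ε) : 0 < noiseMultiplier K ε := by
  have : |K| < √(K ^ 2 + 2 * ε) := by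
    rw [← sqrt_sq_eq_abs]
    exact sqrt_lt_sqrt (sq_nonneg K) (by linarith)
  have : 0 < K + √(K ^ 2 + 2 * ε) := by linarith [neg_abs_le K]
  unfold noiseMultiplier
  positivity

lemma mul_noiseMultiplier_sub_inv (K : ℝ) {ε : ℝ} (hε : 0 < ε) :
    ε * noiseMultiplier K ε - 1 / (2 * noiseMultiplier K ε) = K := by
  have hκ := noiseMultiplier_pos K hε
  have hs : √(K ^ 2 + 2 * ε) ^ 2 = K ^ 2 + 2 * ε := sq_sqrt (by positivity)
  have hroot : 2 * ε * noiseMultiplier K ε ^ 2 - 2 * K * noiseMultiplier K ε - 1 = 0 := by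
    unfold noiseMultiplier
    field_simp
    linear_combination hs
  field_simp
  linear_combination hroot

lemma le_sub_of_mul_noiseMultiplier_le {K ε σ t : ℝ} (hε : 0 < ε) (ht : 0 < t)
    (h : t * noiseMultiplier K ε ≤ σ) : K ≤ ε * σ / t - t / (2 * σ) := by
  have hκ := noiseMultiplier_pos K hε
  have hκσ : noiseMultiplier K ε ≤ σ / t := by rwa [le_div_iff₀' ht]
  have hσ : 0 < σ := by nlinarith
  calc K = ε * noiseMultiplier K ε - 1 / (2 * noiseMultiplier K ε) :=
        (mul_noiseMultiplier_sub_inv K hε).symm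
    _ ≤ ε * (σ / t) - 1 / (2 * (σ / t)) := by gcongr
    _ = ε * σ / t - t / (2 * σ) := by field_simp

lemma gaussianReal_apply_le_exp_mul_add_Qfun {ε K σ a a' : ℝ} (hσ : 0 < σ) (ha : a' < a)
    (hK : K ≤ ε * σ / (a - a') - (a - a') / (2 * σ)) (S : Set ℝ) :
    gaussianReal a (σ ^ 2).toNNReal S ≤
      ENNReal.ofReal (exp ε) * gaussianReal a' (σ ^ 2).toNNReal S + ENNReal.ofReal (Qfun K) := by
  have hv : (σ ^ 2).toNNReal ≠ 0 := by simp [hσ.ne']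
  refine (measure_le_mul_add_of_restrict_le
    (gaussianReal_restrict_le_exp_smul a a' ε hv) S).trans ?_
  gcongr
  rw [← gaussianReal_Ioi_add_mul a hσ K]
  refine measure_mono fun x hx ↦ ?_
  have hc : 0 < a - a' := sub_pos.2 ha
  have hx : 2 * ε * σ ^ 2 < (a - a') * (2 * (x - a) + (a - a')) := by
    simp only [mem_compl_iff, mem_ofPred_eq, not_le, Real.coe_toNNReal _ (sq_nonneg σ)] at hx
    linarith
  have hσK : σ * K ≤ ε * σ ^ 2 / (a - a') - (a - a') / 2 := by
    calc σ * K ≤ σ * (ε * σ / (a - a') - (a - a') / (2 * σ)) := by gcongr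
      _ = ε * σ ^ 2 / (a - a') - (a - a') / 2 := by field_simp
  have : ε * σ ^ 2 / (a - a') - (a - a') / 2 < x - a := by
    rw [sub_lt_iff_lt_add, div_lt_iff₀ hc]
    linarith
  exact mem_Ioi.2 (by linarith)

theorem gaussian_mechanism_dp_general (ε δ Δ Kδ σ : ℝ)
    (hε : 0 < ε)
    (hKδ : Qfun Kδ = δ) (hΔ : 0 < Δ)
    (hσ : σ ≥ Δ * ((1 / (2 * ε)) * (Kδ + Real.sqrt (Kδ ^ 2 + 2 * ε)))) :
    ∀ a a2 : ℝ, |a - a2| ≤ Δ →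
      ∀ S : Set ℝ, MeasurableSet S →
        gaussianReal a (Real.toNNReal (σ ^ 2)) S ≤
          ENNReal.ofReal (Real.exp ε) * gaussianReal a2 (Real.toNNReal (σ ^ 2)) S +
            ENNReal.ofReal δ := by
  intro a a2 ha S _
  have hκ := noiseMultiplier_pos Kδ hε
  have hσ0 : 0 < σ := (mul_pos hΔ hκ).trans_le hσ
  have hK {t : ℝ} (ht : 0 < t) (htΔ : t ≤ Δ) : Kδ ≤ ε * σ / t - t / (2 * σ) :=
    le_sub_of_mul_noiseMultiplier_le hε ht ((mul_le_mul_of_nonneg_right htΔ hκ.le).trans hσ)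
  rw [← hKδ]
  rcases lt_trichotomy a2 a with h | rfl | h
  · exact gaussianReal_apply_le_exp_mul_add_Qfun hσ0 h
      (hK (sub_pos.2 h) ((le_abs_self _).trans ha)) S
  · exact le_add_right (le_mul_of_one_le_left' (ENNReal.one_le_ofReal.2 (one_le_exp hε.le)))
  · rw [← gaussianReal_neg_apply a, ← gaussianReal_neg_apply a2]
    refine gaussianReal_apply_le_exp_mul_add_Qfun hσ0 (neg_lt_neg h) (hK (by linarith) ?_) (-S)
    rw [abs_sub_comm] at ha
    linarith [le_abs_self (a2 - a)]

theorem gaussian_mechanism_dp (ε δ Δ Kδ σ : ℝ)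
    (hε : 0 < ε) (hδ₁ : 0 < δ) (hδ₂ : δ < 1 / 2)
    (hKδ : Qfun Kδ = δ) (hΔ : 0 < Δ)
    (hσ : σ ≥ Δ * ((1 / (2 * ε)) * (Kδ + Real.sqrt (Kδ ^ 2 + 2 * ε)))) :
    ∀ a a2 : ℝ, |a - a2| ≤ Δ →
      ∀ S : Set ℝ, MeasurableSet S →
        gaussianReal a (Real.toNNReal (σ ^ 2)) S ≤
          ENNReal.ofReal (Real.exp ε) * gaussianReal a2 (Real.toNNReal (σ ^ 2)) S +
            ENNReal.ofReal δ :=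
  gaussian_mechanism_dp_general ε δ Δ Kδ σ hε hKδ hΔ hσ
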